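/- Let r > 1 and let ν = {-π = s_0 < s_1 < ... < s_l = π} be a partition of [-π, π] with norm ρ = max_i |s_{i+1} - s_i|. For t ∈ [-π, π] let ⌊t⌋ denote the largest element of ν that is ≤ t. Then for every t ∈ [-π, π], ∫_{-π}^{t} |D_N(⌊t⌋ - ⌊s⌋)|^r ds ≤ 5(ρ + (2N+1)^{-1})(2N+1)^r + (2π^r/(r-1))(2N+1)^{r-1}. -/

import Mathlib

/-!
Write `τ = ⌊t⌋` and `δ = (2N+1)⁻¹`. The integrand is at most `(2N+1)^r` everywhere, and this
trivial bound is used off the window `[ρ - π + δ, τ - δ]`, whose complement in `(-π, t]` has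
measure at most `2(ρ + δ)`. Inside the window, `y = τ - ⌊s⌋` satisfies `τ - s ≤ y` and
`s - (ρ - π) ≤ 2π - y` (because `⌊·⌋` is monotone and `s - ⌊s⌋ ≤ ρ`), so
`|D_N(y)| ≤ π / min(y, 2π - y)`, a consequence of `|D_N(y) sin(y/2)| ≤ 1` and Jordan's inequality,
bounds the integrand by `π^r((τ - s)^{-r} + (s - ρ + π)^{-r})`; each of these two terms integrates
to at most `π^r δ^{1-r}/(r-1)` over the window.
-/

open Real MeasureTheory

/-- The Dirichlet kernel with `2N+1` harmonics. -/
noncomputable def dirichlet (N : ℕ) (t : ℝ) : ℂ :=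
  ∑ l ∈ Finset.Icc (-(N : ℤ)) (N : ℤ), Complex.exp (Complex.I * l * t)

open Set

lemma dirichlet_eq_zpow_mul_geom_sum (N : ℕ) (t : ℝ) :
    dirichlet N t =
      Complex.exp (Complex.I * t) ^ (-(N : ℤ)) *
        ∑ k ∈ Finset.range (2 * N + 1), Complex.exp (Complex.I * t) ^ k := by
  have hz : Complex.exp (Complex.I * t) ≠ 0 := Complex.exp_ne_zero _
  rw [dirichlet, Finset.mul_sum]
  refine Finset.sum_nbij' (fun l => (l + N).toNat) (fun k => (k : ℤ) - N) ?_ ?_ ?_ ?_ ?_ <;>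
    simp only [Finset.mem_Icc, Finset.mem_range]
  · intro l hl; omega
  · intro k hk; omega
  · intro l hl; omega
  · intro k hk; omega
  · intro l hl
    rw [← zpow_natCast, ← zpow_add₀ hz, mul_comm (Complex.I : ℂ), mul_assoc, Complex.exp_int_mul]
    congr 1; omega

lemma norm_dirichlet_le (N : ℕ) (t : ℝ) : ‖dirichlet N t‖ ≤ 2 * N + 1 := by
  have hz := Complex.norm_exp_I_mul_ofReal t
  rw [dirichlet_eq_zpow_mul_geom_sum, norm_mul, norm_zpow, hz, one_zpow, one_mul]
  refine (norm_sum_le _ _).trans_eq ?_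
  simp [hz]

lemma norm_dirichlet_mul_abs_sin_le (N : ℕ) (t : ℝ) : ‖dirichlet N t‖ * |sin (t / 2)| ≤ 1 := by
  set z := Complex.exp (Complex.I * t)
  have hz : ‖z‖ = 1 := Complex.norm_exp_I_mul_ofReal t
  have hsin : ‖z - 1‖ = 2 * |sin (t / 2)| := by
    rw [Complex.norm_exp_I_mul_ofReal_sub_one, norm_mul, Real.norm_eq_abs]; norm_num
  have hprod : ‖dirichlet N t‖ * ‖z - 1‖ ≤ 2 := by
    rw [dirichlet_eq_zpow_mul_geom_sum, norm_mul, norm_zpow, hz, one_zpow, one_mul, ← norm_mul,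
      geom_sum_mul]
    refine (norm_sub_le _ _).trans_eq ?_
    rw [norm_pow, hz]; norm_num
  rw [hsin] at hprod
  linarith

lemma min_le_pi_mul_sin_half {t : ℝ} (h0 : 0 ≤ t) (h2 : t ≤ 2 * π) :
    min t (2 * π - t) ≤ π * sin (t / 2) := by
  rcases le_total t π with h | h
  · calc min t (2 * π - t) ≤ t := min_le_left _ _
      _ = π * (2 / π * (t / 2)) := by field_simp
      _ ≤ π * sin (t / 2) := by gcongr; exact mul_le_sin (by linarith) (by linarith)
  · calc min t (2 * π - t) ≤ 2 * π - t := min_le_right _ _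
      _ = π * (2 / π * (π - t / 2)) := by field_simp
      _ ≤ π * sin (π - t / 2) := by gcongr; exact mul_le_sin (by linarith) (by linarith)
      _ = π * sin (t / 2) := by rw [sin_pi_sub]

lemma norm_dirichlet_le_pi_div_min (N : ℕ) {t : ℝ} (h0 : 0 < t) (h2 : t < 2 * π) :
    ‖dirichlet N t‖ ≤ π / min t (2 * π - t) := by
  have hmin : 0 < min t (2 * π - t) := lt_min h0 (by linarith)
  rw [le_div_iff₀ hmin]
  calc ‖dirichlet N t‖ * min t (2 * π - t)
      ≤ ‖dirichlet N t‖ * (π * |sin (t / 2)|) := by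
        gcongr
        exact (min_le_pi_mul_sin_half h0.le h2.le).trans (by gcongr; exact le_abs_self _)
    _ = π * (‖dirichlet N t‖ * |sin (t / 2)|) := by ring
    _ ≤ π := mul_le_of_le_one_right pi_pos.le (norm_dirichlet_mul_abs_sin_le N t)

lemma rpow_min_le_rpow_add_rpow {x y : ℝ} (hx : 0 ≤ x) (hy : 0 ≤ y) (r : ℝ) :
    min x y ^ r ≤ x ^ r + y ^ r := by
  rcases min_choice x y with h | h <;> rw [h] <;> linarith [rpow_nonneg hx r, rpow_nonneg hy r]

lemma integral_rpow_neg_le {r δ T : ℝ} (hr : 1 < r) (hδ : 0 < δ) (hT : δ ≤ T) :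
    ∫ u in δ..T, u ^ (-r) ≤ δ ^ (1 - r) / (r - 1) := by
  have h0 : (0 : ℝ) ∉ uIcc δ T := by
    rw [uIcc_of_le hT]; exact fun h => hδ.not_ge h.1
  have hflip : (T ^ (1 - r) - δ ^ (1 - r)) / (1 - r) = (δ ^ (1 - r) - T ^ (1 - r)) / (r - 1) := by
    rw [← neg_div_neg_eq, neg_sub, neg_sub]
  rw [integral_rpow (Or.inr ⟨by linarith, h0⟩), show -r + 1 = 1 - r by ring, hflip]
  gcongr
  linarith [rpow_nonneg (hδ.le.trans hT) (1 - r)]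

lemma continuousOn_rpow_neg_window (r δ c₁ c₂ : ℝ) (hδ : 0 < δ) :
    ContinuousOn (fun s => (c₁ - s) ^ (-r) + (s - c₂) ^ (-r)) (Icc (c₂ + δ) (c₁ - δ)) := by
  refine ContinuousOn.add ?_ ?_ <;>
    refine ContinuousOn.rpow_const (by fun_prop) fun s hs => Or.inl ?_ <;>
    linarith [hs.1, hs.2]

lemma integral_rpow_neg_window_le {r δ c₁ c₂ : ℝ} (hr : 1 < r) (hδ : 0 < δ) :
    ∫ s in Icc (c₂ + δ) (c₁ - δ), ((c₁ - s) ^ (-r) + (s - c₂) ^ (-r)) ≤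
      2 * (δ ^ (1 - r) / (r - 1)) := by
  have hnonneg : 0 ≤ δ ^ (1 - r) / (r - 1) := div_nonneg (rpow_nonneg hδ.le _) (by linarith)
  rcases lt_or_ge (c₁ - δ) (c₂ + δ) with hempty | hab
  · rw [Icc_eq_empty_of_lt hempty, setIntegral_empty]; linarith
  have h₁ : IntervalIntegrable (fun s => (c₁ - s) ^ (-r)) volume (c₂ + δ) (c₁ - δ) := by
    refine ContinuousOn.intervalIntegrable (.rpow_const (by fun_prop) fun s hs => .inl ?_)
    rw [uIcc_of_le hab] at hs; linarith [hs.2]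
  have h₂ : IntervalIntegrable (fun s => (s - c₂) ^ (-r)) volume (c₂ + δ) (c₁ - δ) := by
    refine ContinuousOn.intervalIntegrable (.rpow_const (by fun_prop) fun s hs => .inl ?_)
    rw [uIcc_of_le hab] at hs; linarith [hs.1]
  rw [integral_Icc_eq_integral_Ioc, ← intervalIntegral.integral_of_le hab,
    intervalIntegral.integral_add h₁ h₂, intervalIntegral.integral_comp_sub_left (fun u => u ^ (-r)),
    intervalIntegral.integral_comp_sub_right (fun u => u ^ (-r)), sub_sub_cancel, add_sub_cancel_left]
  have hT : δ ≤ c₁ - (c₂ + δ) := by linarith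
  have hT' : δ ≤ c₁ - δ - c₂ := by linarith
  linarith [integral_rpow_neg_le hr hδ hT, integral_rpow_neg_le hr hδ hT']

lemma measureReal_Ioc_diff_Icc_le {x y a b : ℝ} (ha : x ≤ a) (hb : b ≤ y) :
    volume.real (Ioc x y \ Icc a b) ≤ (a - x) + (y - b) := by
  have hsub : Ioc x y \ Icc a b ⊆ Ioc x a ∪ Ioc b y := by
    rintro s ⟨⟨hxs, hsy⟩, hs⟩
    rw [mem_Icc, not_and_or, not_le, not_le] at hs
    rcases hs with h | h
    · exact Or.inl ⟨hxs, h.le⟩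
    · exact Or.inr ⟨h, hsy⟩
  calc volume.real (Ioc x y \ Icc a b) ≤ volume.real (Ioc x a ∪ Ioc b y) :=
        measureReal_mono hsub (measure_union_lt_top measure_Ioc_lt_top measure_Ioc_lt_top).ne
    _ ≤ volume.real (Ioc x a) + volume.real (Ioc b y) := measureReal_union_le _ _
    _ = (a - x) + (y - b) := by rw [Real.volume_real_Ioc_of_le ha, Real.volume_real_Ioc_of_le hb]

lemma setIntegral_le_of_le_rpow_neg_window {f : ℝ → ℝ} {S : Set ℝ} (hS : MeasurableSet S)
    (hSfin : volume S ≠ ⊤) {C K r δ c₁ c₂ : ℝ} (hr : 1 < r) (hδ : 0 < δ) (hK : 0 ≤ K)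
    (hf0 : ∀ s ∈ S, 0 ≤ f s) (hC : ∀ s ∈ S, f s ≤ C)
    (hwin : ∀ s ∈ S, s ∈ Icc (c₂ + δ) (c₁ - δ) →
      f s ≤ K * ((c₁ - s) ^ (-r) + (s - c₂) ^ (-r))) :
    ∫ s in S, f s ≤
      C * volume.real (S \ Icc (c₂ + δ) (c₁ - δ)) + K * (2 * (δ ^ (1 - r) / (r - 1))) := by
  set W := Icc (c₂ + δ) (c₁ - δ)
  set g : ℝ → ℝ := fun s => K * ((c₁ - s) ^ (-r) + (s - c₂) ^ (-r))
  have hg0 : ∀ s ∈ W, 0 ≤ g s := fun s hs => mul_nonneg hK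
    (add_nonneg (rpow_nonneg (by linarith [hs.2]) _) (rpow_nonneg (by linarith [hs.1]) _))
  have hgint : IntegrableOn g W :=
    ((continuousOn_rpow_neg_window r δ c₁ c₂ hδ).const_smul K).integrableOn_Icc
  have hgW : Integrable (W.indicator g) := (integrable_indicator_iff measurableSet_Icc).2 hgint
  have hCint : IntegrableOn (Wᶜ.indicator fun _ => C) S :=
    (integrableOn_const hSfin).indicator measurableSet_Icc.compl
  calc ∫ s in S, f s ≤ ∫ s in S, (Wᶜ.indicator (fun _ => C) s + W.indicator g s) := by
        -- `integral_mono_of_nonneg` needs no integrability (or measurability) of `f`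
        refine integral_mono_of_nonneg (ae_restrict_of_forall_mem hS hf0)
          (hCint.add hgW.integrableOn) (ae_restrict_of_forall_mem hS fun s hs => ?_)
        by_cases hsW : s ∈ W
        · simpa [hsW] using hwin s hs hsW
        · simpa [hsW] using hC s hs
    _ = C * volume.real (S \ W) + ∫ s in S, W.indicator g s := by
        rw [integral_add hCint hgW.integrableOn, setIntegral_indicator measurableSet_Icc.compl,
          setIntegral_const, ← sdiff_eq, smul_eq_mul, mul_comm]
    _ ≤ C * volume.real (S \ W) + ∫ s, W.indicator g s :=
        (add_le_add_iff_left _).2 (setIntegral_le_integral hgW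
          (Filter.Eventually.of_forall fun s => indicator_nonneg hg0 s))
    _ ≤ C * volume.real (S \ W) + K * (2 * (δ ^ (1 - r) / (r - 1))) := by
        rw [integral_indicator measurableSet_Icc, integral_const_mul]
        gcongr
        exact integral_rpow_neg_window_le hr hδ

lemma norm_dirichlet_rpow_le_of_le (N : ℕ) {r p q y : ℝ} (hr : 0 ≤ r) (hp : 0 < p) (hpy : p ≤ y)
    (hq : 0 < q) (hqy : q ≤ 2 * π - y) :
    ‖dirichlet N y‖ ^ r ≤ π ^ r * (p ^ (-r) + q ^ (-r)) := by
  have hm : 0 < min p q := lt_min hp hq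
  calc ‖dirichlet N y‖ ^ r ≤ (π / min p q) ^ r := by
        gcongr
        refine (norm_dirichlet_le_pi_div_min N (by linarith) (by linarith)).trans ?_
        gcongr
    _ = π ^ r * min p q ^ (-r) := by
        rw [div_rpow pi_pos.le hm.le, rpow_neg hm.le, div_eq_mul_inv]
    _ ≤ π ^ r * (p ^ (-r) + q ^ (-r)) := by
        gcongr
        exact rpow_min_le_rpow_add_rpow hp.le hq.le _

lemma norm_dirichlet_floor_sub_rpow_le {ν : Finset ℝ} {fl : ℝ → ℝ}
    (hfl : ∀ t ∈ Icc (-π) π, fl t ∈ ν ∧ fl t ≤ t ∧ ∀ z ∈ ν, z ≤ t → z ≤ fl t)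
    {ρ : ℝ} (hρ : ∀ t ∈ Icc (-π) π, t - fl t ≤ ρ) (N : ℕ) {r s t : ℝ} (hr : 0 ≤ r)
    (ht : t ∈ Icc (-π) π) (hs : s ∈ Ioc (-π) t) (hst : s < fl t) (hρs : ρ - π < s) :
    ‖dirichlet N (fl t - fl s)‖ ^ r ≤ π ^ r * ((fl t - s) ^ (-r) + (s - (ρ - π)) ^ (-r)) := by
  have hsI : s ∈ Icc (-π) π := ⟨hs.1.le, hs.2.trans ht.2⟩
  obtain ⟨hsν, hsfl, -⟩ := hfl s hsI
  have hmono : fl s ≤ fl t := (hfl t ht).2.2 _ hsν (hsfl.trans hs.2)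
  have hflt : fl t ≤ π := (hfl t ht).2.1.trans ht.2
  have hgap := hρ s hsI
  exact norm_dirichlet_rpow_le_of_le N hr (by linarith) (by linarith) (by linarith) (by linarith)

theorem stmt3_general (r : ℝ) (hr : 1 < r) (N : ℕ)
    (ν : Finset ℝ)
    (fl : ℝ → ℝ)
    (hfl : ∀ t ∈ Set.Icc (-π) π,
      fl t ∈ ν ∧ fl t ≤ t ∧ ∀ z ∈ ν, z ≤ t → z ≤ fl t)
    (ρ : ℝ) (hρ : ∀ t ∈ Set.Icc (-π) π, t - fl t ≤ ρ)
    (t : ℝ) (ht : t ∈ Set.Icc (-π) π) :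
    (∫ s in (-π)..t, ‖dirichlet N (fl t - fl s)‖ ^ r) ≤
      5 * (ρ + (2 * (N : ℝ) + 1)⁻¹) * (2 * (N : ℝ) + 1) ^ r +
        (2 * π ^ r / (r - 1)) * (2 * (N : ℝ) + 1) ^ (r - 1) := by
  set δ : ℝ := (2 * (N : ℝ) + 1)⁻¹
  have hδ : 0 < δ := by positivity
  have hflt : fl t ≤ t := (hfl t ht).2.1
  have hρ0 : 0 ≤ ρ := (sub_nonneg.2 hflt).trans (hρ t ht)
  have hint := setIntegral_le_of_le_rpow_neg_window measurableSet_Ioc measure_Ioc_lt_top.ne hr hδ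
    (rpow_nonneg pi_pos.le r) (fun s _ => by positivity)
    (fun s _ => rpow_le_rpow (norm_nonneg _) (norm_dirichlet_le N _) (by linarith))
    fun s hs hsW => norm_dirichlet_floor_sub_rpow_le hfl hρ N (by linarith) ht hs
      (by linarith [hsW.2]) (by linarith [hsW.1])
  have hvol := measureReal_Ioc_diff_Icc_le (x := -π) (y := t) (a := ρ - π + δ) (b := fl t - δ)
    (by linarith) (by linarith)
  have hδr : δ ^ (1 - r) = (2 * (N : ℝ) + 1) ^ (r - 1) := by
    rw [inv_rpow (by positivity), ← rpow_neg (by positivity), neg_sub]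
  have hC : 0 ≤ (ρ + δ) * (2 * (N : ℝ) + 1) ^ r := by positivity
  rw [intervalIntegral.integral_of_le ht.1]
  calc _ ≤ _ := hint
    _ ≤ (2 * (N : ℝ) + 1) ^ r * (2 * (ρ + δ)) + π ^ r * (2 * (δ ^ (1 - r) / (r - 1))) := by
        gcongr; linarith [hρ t ht]
    _ ≤ _ := by
        rw [hδr, show π ^ r * (2 * ((2 * (N : ℝ) + 1) ^ (r - 1) / (r - 1))) =
          2 * π ^ r / (r - 1) * (2 * (N : ℝ) + 1) ^ (r - 1) by ring]
        linarith

theorem stmt3 (r : ℝ) (hr : 1 < r) (N : ℕ)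
    (ν : Finset ℝ) (hm : (-π) ∈ ν) (hM : π ∈ ν) (hsub : ↑ν ⊆ Set.Icc (-π) π)
    (fl : ℝ → ℝ)
    (hfl : ∀ t ∈ Set.Icc (-π) π,
      fl t ∈ ν ∧ fl t ≤ t ∧ ∀ z ∈ ν, z ≤ t → z ≤ fl t)
    (ρ : ℝ) (hρ : ∀ t ∈ Set.Icc (-π) π, t - fl t ≤ ρ)
    (t : ℝ) (ht : t ∈ Set.Icc (-π) π) :
    (∫ s in (-π)..t, ‖dirichlet N (fl t - fl s)‖ ^ r) ≤
      5 * (ρ + (2 * (N : ℝ) + 1)⁻¹) * (2 * (N : ℝ) + 1) ^ r +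
        (2 * π ^ r / (r - 1)) * (2 * (N : ℝ) + 1) ^ (r - 1) :=
  stmt3_general r hr N ν fl hfl ρ hρ t ht
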